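/- arXiv:1905.09977 — 2 statements merged into one kernel-verified Lean document; each statement's English description precedes it below -/
import Mathlib

section
/- Let G be a locally compact Hausdorff topological group and let X and Y be completely regular Hausdorff spaces equipped with continuous Palais-proper G-actions. Let I_G(X,Y) = {(x,y) ∈ X × Y | G_x ⊆ G_y} with the subspace topology and the diagonal G-action g·(x,y) = (gx, gy), let M_G(X,Y) = I_G(X,Y)/G with the quotient topology, and let π : M_G(X,Y) → X/G be the continuous map induced by (x,y) ↦ x, i.e. π(G(x,y)) = Gx. Then the assignment Γ(f)(Gx) = G(x, f(x)) is a well-defined bijection from the set of continuous G-equivariant maps X → Y onto the set of continuous sections of π. -/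
/-- Palais-proper action of `G` on `X`. -/
def PalaisProper (G X : Type*) [Group G] [MulAction G X] [TopologicalSpace G]
    [TopologicalSpace X] : Prop :=
  ∀ x : X, ∃ U ∈ nhds x, ∀ y : X, ∃ V ∈ nhds y,
    IsCompact (closure {g : G | ∃ v ∈ V, g • v ∈ U})

/-- The space `I_G(X,Y)` of pairs `(x,y)` with `G_x ≤ G_y`, topologized as a
subspace of `X × Y`. -/
abbrev IGpairs (G X Y : Type*) [Group G] [MulAction G X] [MulAction G Y] : Type _ :=
  {q : X × Y // MulAction.stabilizer G q.1 ≤ MulAction.stabilizer G q.2}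

/-- The diagonal `G`-action on `I_G(X,Y)`. -/
instance IGpairs.instMulAction (G X Y : Type*) [Group G] [MulAction G X] [MulAction G Y] :
    MulAction G (IGpairs G X Y) where
  smul g q := ⟨g • q.1, by
    intro h hh
    rw [MulAction.mem_stabilizer_iff] at hh ⊢
    rw [Prod.smul_fst] at hh
    have h1 : g⁻¹ * h * g ∈ MulAction.stabilizer G q.1.1 := by
      rw [MulAction.mem_stabilizer_iff, mul_smul, mul_smul, hh, inv_smul_smul]
    have h2 : (g⁻¹ * h * g) • q.1.2 = q.1.2 := q.2 h1
    have h3 : h * g = g * (g⁻¹ * h * g) := by group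
    rw [Prod.smul_snd, ← mul_smul, h3, mul_smul, h2]⟩
  one_smul q := Subtype.ext (one_smul G q.1)
  mul_smul g g' q := Subtype.ext (mul_smul g g' q.1)

/-- The orbit space `M_G(X,Y) = I_G(X,Y)/G`, with the quotient topology. -/
abbrev MGorbits (G X Y : Type*) [Group G] [MulAction G X] [MulAction G Y]
    [TopologicalSpace X] [TopologicalSpace Y] : Type _ :=
  Quotient (MulAction.orbitRel G (IGpairs G X Y))

/-- The map `π : M_G(X,Y) → X/G`, `G(x,y) ↦ Gx`. -/
def piMap (G X Y : Type*) [Group G] [MulAction G X] [MulAction G Y]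
    [TopologicalSpace X] [TopologicalSpace Y] :
    MGorbits G X Y → Quotient (MulAction.orbitRel G X) :=
  Quotient.map (fun q => q.1.1) (by
    intro a b hab
    obtain ⟨g, hg⟩ := hab
    exact ⟨g, by rw [← hg]; rfl⟩)


open Filter Topology MulAction

section Aux
set_option linter.unusedSectionVars false
variable {G X Y : Type*} [Group G] [TopologicalSpace G]
  [TopologicalSpace X] [MulAction G X] [TopologicalSpace Y] [MulAction G Y]

theorem continuous_smul_IG (hcX : Continuous fun p : G × X => p.1 • p.2)
    (hcY : Continuous fun p : G × Y => p.1 • p.2) :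
    Continuous fun p : G × IGpairs G X Y => p.1 • p.2 := by
  have h1 : Continuous fun p : G × IGpairs G X Y => p.1 • (p.2 : X × Y).1 :=
    hcX.comp (continuous_fst.prodMk ((continuous_fst.comp continuous_subtype_val).comp
      continuous_snd))
  have h2 : Continuous fun p : G × IGpairs G X Y => p.1 • (p.2 : X × Y).2 :=
    hcY.comp (continuous_fst.prodMk ((continuous_snd.comp continuous_subtype_val).comp
      continuous_snd))
  exact Continuous.subtype_mk (h1.prodMk h2) _

theorem isOpenMap_mk_IG (hcX : Continuous fun p : G × X => p.1 • p.2)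
    (hcY : Continuous fun p : G × Y => p.1 • p.2) :
    IsOpenMap (Quotient.mk (MulAction.orbitRel G (IGpairs G X Y))) := by
  haveI : ContinuousConstSMul G (IGpairs G X Y) :=
    ⟨fun g => (continuous_smul_IG hcX hcY).comp (continuous_const.prodMk continuous_id)⟩
  exact (MulAction.isOpenQuotientMap_quotientMk).isOpenMap

/-- Key estimate: the map `q ↦ (q.1.1, [q])` from `I_G(X,Y)` to `X × M_G(X,Y)`
is an embedding (the comap inequality at each point). -/
theorem key_comap [T2Space X]
    (hcX : Continuous fun p : G × X => p.1 • p.2)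
    (hcY : Continuous fun p : G × Y => p.1 • p.2)
    (hPX : PalaisProper G X) (q₀ : IGpairs G X Y) :
    Filter.comap (fun q : IGpairs G X Y =>
        ((q : X × Y).1, Quotient.mk (MulAction.orbitRel G (IGpairs G X Y)) q))
      (𝓝 ((q₀ : X × Y).1, Quotient.mk (MulAction.orbitRel G (IGpairs G X Y)) q₀))
      ≤ 𝓝 q₀ := by
  set x₀ := (q₀ : X × Y).1 with hx₀
  intro N hN
  rw [Filter.mem_comap]
  -- Palais properness data at x₀
  obtain ⟨U₀, hU₀, hprop⟩ := hPX x₀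
  obtain ⟨V, hV, hK⟩ := hprop x₀
  set K := closure {g : G | ∃ v ∈ V, g • v ∈ U₀} with hKdef
  -- main claim
  have claim : ∃ U ∈ 𝓝 x₀, ∃ N' ∈ 𝓝 q₀, ∀ (g : G) (q' : IGpairs G X Y),
      q' ∈ N' → g • (q' : X × Y).1 ∈ U → g • q' ∈ N := by
    by_contra hcon
    push_neg at hcon
    -- build the filter F
    set u1 : G × IGpairs G X Y → X := fun p => p.1 • (p.2 : X × Y).1 with hu1
    set F : Filter (G × IGpairs G X Y) :=
      (Filter.comap u1 (𝓝 x₀) ⊓ Filter.comap Prod.snd (𝓝 q₀)) ⊓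
        Filter.principal {p : G × IGpairs G X Y | p.1 • p.2 ∉ N} with hF
    have hB : F.HasBasis (fun UN : Set X × Set (IGpairs G X Y) => UN.1 ∈ 𝓝 x₀ ∧ UN.2 ∈ 𝓝 q₀)
        (fun UN => (u1 ⁻¹' UN.1 ∩ Prod.snd ⁻¹' UN.2) ∩ {p | p.1 • p.2 ∉ N}) :=
      (((𝓝 x₀).basis_sets.comap u1).inf ((𝓝 q₀).basis_sets.comap Prod.snd)).inf_principal _
    have hFne : F.NeBot := by
      rw [hB.neBot_iff]
      rintro ⟨U, N'⟩ ⟨hU, hN'⟩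
      obtain ⟨g, q', hq'N', hgU, hgN⟩ := hcon U hU N' hN'
      exact ⟨(g, q'), ⟨⟨hgU, hq'N'⟩, hgN⟩⟩
    -- tendsto facts
    have hle1 : F ≤ Filter.comap u1 (𝓝 x₀) := le_trans inf_le_left inf_le_left
    have hle2 : F ≤ Filter.comap Prod.snd (𝓝 q₀) := le_trans inf_le_left inf_le_right
    have h1 : Filter.Tendsto u1 F (𝓝 x₀) := Filter.tendsto_iff_comap.2 hle1
    have h2 : Filter.Tendsto Prod.snd F (𝓝 q₀) := Filter.tendsto_iff_comap.2 hle2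
    have h3 : {p : G × IGpairs G X Y | p.1 • p.2 ∉ N} ∈ F :=
      Filter.le_principal_iff.1 inf_le_right
    -- eventually in K
    have hVq : {q : IGpairs G X Y | (q : X × Y).1 ∈ V} ∈ 𝓝 q₀ :=
      (continuous_fst.comp continuous_subtype_val).continuousAt.preimage_mem_nhds hV
    have hEvK : ∀ᶠ p in F, p.1 ∈ K := by
      filter_upwards [h2.eventually (eventually_mem_set.2 hVq),
        h1.eventually (eventually_mem_set.2 hU₀)] with p hp1 hp2
      exact subset_closure ⟨(p.2 : X × Y).1, hp1, hp2⟩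
    -- ultrafilter
    obtain ⟨UF, hUF⟩ := F.exists_ultrafilter_le
    have hKmem : K ∈ UF.map Prod.fst := Filter.mem_map.2 (hUF (by filter_upwards [hEvK] with p hp using hp))
    obtain ⟨ginf, hginfK, hconv⟩ := hK.ultrafilter_le_nhds (UF.map Prod.fst)
      (Filter.le_principal_iff.2 hKmem)
    have hfst : Filter.Tendsto Prod.fst (UF : Filter (G × IGpairs G X Y)) (𝓝 ginf) := hconv
    have hsnd : Filter.Tendsto Prod.snd (UF : Filter (G × IGpairs G X Y)) (𝓝 q₀) :=
      h2.mono_left hUF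
    have hact : Filter.Tendsto (fun p : G × IGpairs G X Y => p.1 • p.2) UF (𝓝 (ginf • q₀)) :=
      ((continuous_smul_IG hcX hcY).continuousAt.tendsto).comp (hfst.prodMk_nhds hsnd)
    -- ginf • x₀ = x₀
    have hxlim : Filter.Tendsto u1 (UF : Filter (G × IGpairs G X Y)) (𝓝 x₀) := h1.mono_left hUF
    have hxlim2 : Filter.Tendsto u1 (UF : Filter (G × IGpairs G X Y)) (𝓝 ((ginf • q₀ : IGpairs G X Y) : X × Y).1) :=
      ((continuous_fst.comp continuous_subtype_val).continuousAt.tendsto).comp hact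
    have hfix : ginf • x₀ = x₀ := (tendsto_nhds_unique hxlim2 hxlim)
    have hstab : ginf ∈ MulAction.stabilizer G x₀ := hfix
    have hq₀fix : ginf • q₀ = q₀ := by
      apply Subtype.ext
      apply Prod.ext
      · exact hfix
      · exact q₀.2 hstab
    rw [hq₀fix] at hact
    have : ∀ᶠ p in (UF : Filter (G × IGpairs G X Y)), p.1 • p.2 ∈ N := hact.eventually
      (eventually_mem_set.2 hN)
    obtain ⟨p, hp1, hp2⟩ := (this.and (hUF h3)).exists
    exact hp2 hp1
  -- use the claim
  obtain ⟨U, hU, N', hN', hprop'⟩ := claim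
  refine ⟨U ×ˢ (Quotient.mk (MulAction.orbitRel G (IGpairs G X Y)) '' interior N'), ?_, ?_⟩
  · apply prod_mem_nhds hU
    exact ((isOpenMap_mk_IG hcX hcY) _ isOpen_interior).mem_nhds
      ⟨q₀, mem_interior_iff_mem_nhds.2 hN', rfl⟩
  · rintro q ⟨hqU, hqM⟩
    obtain ⟨q', hq'N', hq'eq⟩ := hqM
    obtain ⟨g, hg⟩ := Quotient.exact hq'eq
    -- hg : g • q = q'
    have : g⁻¹ • q' = q := by rw [← hg, inv_smul_smul]
    have h1 : g⁻¹ • (q' : X × Y).1 ∈ U := by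
      have : ((g⁻¹ • q' : IGpairs G X Y) : X × Y).1 = (q : X × Y).1 := by rw [this]
      rw [show ((g⁻¹ • q' : IGpairs G X Y) : X × Y).1 = g⁻¹ • (q' : X × Y).1 from rfl] at this
      rwa [this]
    have := hprop' g⁻¹ q' (interior_subset hq'N') h1
    rwa [show g⁻¹ • q' = q from by rw [← hg, inv_smul_smul]] at this
end Aux

theorem IG_unique {G X Y : Type*} [Group G] [MulAction G X] [MulAction G Y]
    {q q' : IGpairs G X Y} (h1 : (q : X × Y).1 = (q' : X × Y).1)
    (h2 : Quotient.mk (MulAction.orbitRel G (IGpairs G X Y)) q =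
      Quotient.mk (MulAction.orbitRel G (IGpairs G X Y)) q') :
    (q : X × Y).2 = (q' : X × Y).2 := by
  obtain ⟨g, hg⟩ := Quotient.exact h2
  -- hg : g • q' = q
  have hv : (g • (q' : X × Y) : X × Y) = (q : X × Y) := congrArg Subtype.val hg
  have hfst : g • (q' : X × Y).1 = (q' : X × Y).1 := by
    have := congrArg Prod.fst hv
    rw [Prod.smul_fst] at this
    rw [this, h1]
  have hst : g ∈ MulAction.stabilizer G (q' : X × Y).2 := q'.2 hfst
  have := congrArg Prod.snd hv
  rw [Prod.smul_snd] at this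
  rw [← this, hst]

/-- **Segal–Kosniowski–tom Dieck correspondence (generalized).** For a locally
compact Hausdorff group `G` and Tikhonov Palais-proper `G`-spaces `X`, `Y`, the map
`π : M_G(X,Y) → X/G` is continuous and `Γ(f)(Gx) = G(x, f x)` is a well-defined
bijection from the continuous `G`-maps `X → Y` onto the continuous sections of `π`. -/
theorem tomDieck_correspondence
    (G : Type*) [Group G] [TopologicalSpace G] [IsTopologicalGroup G]
    [LocallyCompactSpace G] [T2Space G]
    (X Y : Type*) [TopologicalSpace X] [MulAction G X] [TopologicalSpace Y] [MulAction G Y]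
    [CompletelyRegularSpace X] [T2Space X] [CompletelyRegularSpace Y] [T2Space Y]
    (hcX : Continuous fun p : G × X => p.1 • p.2)
    (hcY : Continuous fun p : G × Y => p.1 • p.2)
    (hPX : PalaisProper G X) (hPY : PalaisProper G Y) :
    Continuous (piMap G X Y) ∧
    ∃ Γ : {f : X → Y // Continuous f ∧ ∀ (g : G) (x : X), f (g • x) = g • f x} ≃
        {s : Quotient (MulAction.orbitRel G X) → MGorbits G X Y //
          Continuous s ∧ ∀ q, piMap G X Y (s q) = q},
      ∀ (f : {f : X → Y // Continuous f ∧ ∀ (g : G) (x : X), f (g • x) = g • f x}) (x : X),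
        (Γ f).1 (Quotient.mk (MulAction.orbitRel G X) x) =
          Quotient.mk (MulAction.orbitRel G (IGpairs G X Y))
            ⟨(x, f.1 x), fun h hh => by
              rw [MulAction.mem_stabilizer_iff] at hh ⊢
              rw [← f.2.2 h x, hh]⟩ := by
  classical
  have hpi : Continuous (piMap G X Y) := by
    apply Continuous.quotient_map'
    exact continuous_fst.comp continuous_subtype_val
  refine ⟨hpi, ?_⟩
  set mkI := Quotient.mk (MulAction.orbitRel G (IGpairs G X Y)) with hmkI
  set mkX := Quotient.mk (MulAction.orbitRel G X) with hmkX
  -- Forward direction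
  have pf : ∀ (f : {f : X → Y // Continuous f ∧ ∀ (g : G) (x : X), f (g • x) = g • f x}) (x : X),
      MulAction.stabilizer G x ≤ MulAction.stabilizer G (f.1 x) := fun f x h hh => by
    rw [MulAction.mem_stabilizer_iff] at hh ⊢
    rw [← f.2.2 h x, hh]
  let wmap : ∀ _ : {f : X → Y // Continuous f ∧ ∀ (g : G) (x : X), f (g • x) = g • f x},
      X → IGpairs G X Y := fun f x => ⟨(x, f.1 x), pf f x⟩
  let toF : ∀ _ : {f : X → Y // Continuous f ∧ ∀ (g : G) (x : X), f (g • x) = g • f x},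
      {s : Quotient (MulAction.orbitRel G X) → MGorbits G X Y //
        Continuous s ∧ ∀ q, piMap G X Y (s q) = q} := fun f =>
    ⟨Quotient.map (wmap f) (by
      intro a b hab
      obtain ⟨g, hg⟩ := hab
      refine ⟨g, ?_⟩
      apply Subtype.ext
      have hg' : g • b = a := hg
      show g • ((b : X), f.1 b) = ((a : X), f.1 a)
      rw [Prod.smul_mk, ← f.2.2 g b, hg']), by
      apply Continuous.quotient_map'
      exact Continuous.subtype_mk (continuous_id.prodMk f.2.1) _, by
      intro q
      induction q using Quotient.ind with
      | _ x => rfl⟩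
  -- Backward direction
  have hex : ∀ (s : {s : Quotient (MulAction.orbitRel G X) → MGorbits G X Y //
        Continuous s ∧ ∀ q, piMap G X Y (s q) = q}) (x : X),
      ∃ q : IGpairs G X Y, (q : X × Y).1 = x ∧ s.1 (mkX x) = mkI q := by
    intro s x
    obtain ⟨q, hq⟩ := Quotient.exists_rep (s.1 (mkX x))
    have hsec := s.2.2 (mkX x)
    rw [← hq] at hsec
    have hXeq : mkX (q : X × Y).1 = mkX x := hsec
    obtain ⟨g, hg⟩ := Quotient.exact hXeq
    -- hg : g • x = (q : X × Y).1
    refine ⟨g⁻¹ • q, ?_, ?_⟩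
    · show g⁻¹ • (q : X × Y).1 = x
      rw [← hg, inv_smul_smul]
    · rw [← hq]
      exact (Quotient.sound (MulAction.mem_orbit q g⁻¹)).symm
  let fmap : ∀ _ : {s : Quotient (MulAction.orbitRel G X) → MGorbits G X Y //
        Continuous s ∧ ∀ q, piMap G X Y (s q) = q}, X → IGpairs G X Y :=
    fun s x => (hex s x).choose
  have hf1 : ∀ s x, ((fmap s x : IGpairs G X Y) : X × Y).1 = x := fun s x => (hex s x).choose_spec.1
  have hf2 : ∀ s x, s.1 (mkX x) = mkI (fmap s x) := fun s x => (hex s x).choose_spec.2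
  have hwcont : ∀ s, Continuous (fmap s) := by
    intro s
    rw [continuous_iff_continuousAt]
    intro x₀
    have hkey := key_comap hcX hcY hPX (fmap s x₀)
    have hcomp : Filter.Tendsto (fun x => (((fmap s x : IGpairs G X Y) : X × Y).1,
        mkI (fmap s x))) (𝓝 x₀)
        (𝓝 (((fmap s x₀ : IGpairs G X Y) : X × Y).1, mkI (fmap s x₀))) := by
      have heq : (fun x => (((fmap s x : IGpairs G X Y) : X × Y).1, mkI (fmap s x))) =
          fun x => (x, s.1 (mkX x)) := by
        funext x
        rw [hf1, ← hf2]
      rw [heq, hf1, ← hf2]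
      exact (continuous_id.prodMk (s.2.1.comp continuous_quotient_mk')).tendsto x₀
    exact (Filter.tendsto_comap_iff.2 hcomp).mono_right hkey
  have hequiv : ∀ s (g : G) (x : X), ((fmap s (g • x) : IGpairs G X Y) : X × Y).2 =
      g • ((fmap s x : IGpairs G X Y) : X × Y).2 := by
    intro s g x
    have h1 : ((fmap s (g • x) : IGpairs G X Y) : X × Y).1 =
        ((g • fmap s x : IGpairs G X Y) : X × Y).1 := by
      show _ = g • ((fmap s x : IGpairs G X Y) : X × Y).1
      rw [hf1, hf1]
    have h2 : mkI (fmap s (g • x)) = mkI (g • fmap s x) := by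
      rw [← hf2]
      have hx : mkX (g • x) = mkX x := Quotient.sound ⟨g, rfl⟩
      have hq : mkI (g • fmap s x) = mkI (fmap s x) := Quotient.sound ⟨g, rfl⟩
      rw [hx, hq, hf2]
    exact IG_unique h1 h2
  let invF : ∀ _ : {s : Quotient (MulAction.orbitRel G X) → MGorbits G X Y //
        Continuous s ∧ ∀ q, piMap G X Y (s q) = q},
      {f : X → Y // Continuous f ∧ ∀ (g : G) (x : X), f (g • x) = g • f x} := fun s =>
    ⟨fun x => ((fmap s x : IGpairs G X Y) : X × Y).2,
      (continuous_snd.comp continuous_subtype_val).comp (hwcont s), hequiv s⟩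
  have hleft : ∀ f, invF (toF f) = f := by
    intro f
    apply Subtype.ext
    funext x
    show ((fmap (toF f) x : IGpairs G X Y) : X × Y).2 = f.1 x
    have h1 : ((fmap (toF f) x : IGpairs G X Y) : X × Y).1 = ((wmap f x : IGpairs G X Y) : X × Y).1 := by
      exact hf1 (toF f) x
    have h2 : mkI (fmap (toF f) x) = mkI (wmap f x) := by
      exact (hf2 (toF f) x).symm
    exact IG_unique h1 h2
  have hright : ∀ s, toF (invF s) = s := by
    intro s
    apply Subtype.ext
    funext q
    induction q using Quotient.ind with
    | _ x =>
      show mkI (wmap (invF s) x) = s.1 (mkX x)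
      rw [hf2 s x]
      congr 1
      apply Subtype.ext
      apply Prod.ext
      · exact (hf1 s x).symm
      · rfl
  refine ⟨⟨toF, invF, hleft, hright⟩, ?_⟩
  intro f x
  rfl
end

section
/- Let p be a prime, and let the compact additive group ℤ_p of p-adic integers act on the Banach space C(ℤ_p, ℝ) of continuous real-valued functions on ℤ_p with the supremum norm, by translation of the argument: (a·f)(x) = f(x + a). This action is a continuous action by linear isometries, and there exists a compact subset S of C(ℤ_p, ℝ) realizing infinitely many orbit types: the set of stabilizer subgroups {stab(f) | f ∈ S}, where stab(f) = {a ∈ ℤ_p | f(x + a) = f(x) for all x ∈ ℤ_p}, is infinite. -/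
/-- Translation of the argument: `(padicTranslate p a f) x = f (x + a)`. -/
noncomputable def padicTranslate (p : ℕ) [Fact p.Prime] (a : ℤ_[p]) (f : C(ℤ_[p], ℝ)) : C(ℤ_[p], ℝ) :=
  f.comp ⟨fun x => x + a, by continuity⟩

section aux
variable (p : ℕ) [Fact p.Prime]
attribute [local instance] Classical.propDecidable

/-- The clopen ball of radius `p^(-n)` around `0`. -/
def padicBall (n : ℕ) : Set ℤ_[p] := Metric.closedBall 0 ((p : ℝ) ^ (-(n : ℤ)))

lemma padicBall_mem_iff (n : ℕ) (x : ℤ_[p]) :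
    x ∈ padicBall p n ↔ ‖x‖ ≤ (p : ℝ) ^ (-(n : ℤ)) := by
  simp [padicBall, Metric.mem_closedBall, dist_zero_right]

lemma one_lt_p : (1 : ℝ) < p := by exact_mod_cast (Fact.out : p.Prime).one_lt

lemma padicBall_injective : Function.Injective (padicBall p) := by
  intro m n hmn
  by_contra h
  wlog hlt : m < n generalizing m n
  · exact this hmn.symm (Ne.symm h) (by omega)
  have hm : (p : ℤ_[p]) ^ m ∈ padicBall p m := by
    rw [padicBall_mem_iff, PadicInt.norm_p_pow]
  rw [hmn, padicBall_mem_iff, PadicInt.norm_p_pow] at hm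
  have := (zpow_le_zpow_iff_right₀ (one_lt_p p)).mp hm
  omega

lemma mem_padicBall_add {n : ℕ} {a x : ℤ_[p]} (ha : a ∈ padicBall p n) :
    x + a ∈ padicBall p n ↔ x ∈ padicBall p n := by
  rw [padicBall_mem_iff] at ha ⊢
  rw [padicBall_mem_iff]
  constructor
  · intro h
    calc ‖x‖ = ‖x + a + -a‖ := by ring_nf
    _ ≤ max ‖x + a‖ ‖-a‖ := IsUltrametricDist.norm_add_le_max _ _
    _ ≤ _ := by rw [norm_neg]; exact max_le h ha
  · intro h
    calc ‖x + a‖ ≤ max ‖x‖ ‖a‖ := IsUltrametricDist.norm_add_le_max _ _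
    _ ≤ _ := max_le h ha

lemma isClopen_padicBall (n : ℕ) : IsClopen (padicBall p n) :=
  IsUltrametricDist.isClopen_closedBall _ (zpow_pos (by exact_mod_cast (Fact.out : p.Prime).pos) _).ne'

/-- The scaled indicator function of `padicBall p n`. -/
noncomputable def padicF (n : ℕ) : C(ℤ_[p], ℝ) :=
  ⟨fun x => if x ∈ padicBall p n then (1 : ℝ) / (n + 1) else 0, by
    classical
    apply Continuous.if _ continuous_const continuous_const
    intro a ha
    rw [(isClopen_iff_frontier_eq_empty).mp (by simpa using isClopen_padicBall p n)] at ha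
    exact absurd ha (Set.notMem_empty a)⟩

lemma padicF_apply (n : ℕ) (x : ℤ_[p]) :
    padicF p n x = if x ∈ padicBall p n then (1 : ℝ) / (n + 1) else 0 := rfl

lemma norm_padicF_le (n : ℕ) : ‖padicF p n‖ ≤ 1 / (n + 1) := by
  apply (ContinuousMap.norm_le _ (by positivity)).mpr
  intro x
  rw [padicF_apply]
  split
  · rw [Real.norm_eq_abs, abs_of_nonneg (by positivity)]
  · simp
    positivity

lemma stab_padicF (n : ℕ) :
    {a : ℤ_[p] | ∀ x : ℤ_[p], padicF p n (x + a) = padicF p n x} = padicBall p n := by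
  ext a
  simp only [Set.mem_setOf_eq]
  constructor
  · intro h
    have h0 := h 0
    rw [zero_add, padicF_apply, padicF_apply] at h0
    have h00 : (0:ℤ_[p]) ∈ padicBall p n := by rw [padicBall_mem_iff]; simp
    rw [if_pos h00] at h0
    by_contra hc
    rw [if_neg hc] at h0
    have : (0:ℝ) < 1 / (n + 1) := by positivity
    linarith
  · intro ha x
    rw [padicF_apply, padicF_apply, if_congr (mem_padicBall_add p ha) rfl rfl]

end aux

/-- **Infinitely many orbit types for the translation action of `ℤ_p` on `C(ℤ_p, ℝ)`.**
The translation action `(a • f) x = f (x + a)` of the compact group of `p`-adic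
integers on the Banach space of continuous real functions (sup-norm) is a continuous
action by linear isometries, and some compact subset realizes infinitely many orbit
types: its set of stabilizer subgroups is infinite. -/
theorem padic_translation_action_infinitely_many_orbit_types
    (p : ℕ) [Fact p.Prime] :
    (Continuous fun q : ℤ_[p] × C(ℤ_[p], ℝ) => padicTranslate p q.1 q.2) ∧
    (∀ f : C(ℤ_[p], ℝ), padicTranslate p 0 f = f) ∧
    (∀ (a b : ℤ_[p]) (f : C(ℤ_[p], ℝ)),
      padicTranslate p (a + b) f = padicTranslate p a (padicTranslate p b f)) ∧
    (∀ a : ℤ_[p], IsLinearMap ℝ (padicTranslate p a)) ∧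
    (∀ (a : ℤ_[p]) (f : C(ℤ_[p], ℝ)), ‖padicTranslate p a f‖ = ‖f‖) ∧
    ∃ S : Set C(ℤ_[p], ℝ), IsCompact S ∧
      {A : Set ℤ_[p] | ∃ f ∈ S,
        A = {a : ℤ_[p] | ∀ x : ℤ_[p], f (x + a) = f x}}.Infinite := by
  have hzero : ∀ f : C(ℤ_[p], ℝ), padicTranslate p 0 f = f := by
    intro f; ext x; simp [padicTranslate]
  have hadd : ∀ (a b : ℤ_[p]) (f : C(ℤ_[p], ℝ)),
      padicTranslate p (a + b) f = padicTranslate p a (padicTranslate p b f) := by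
    intro a b f; ext x; simp [padicTranslate, add_assoc]
  have hle : ∀ (a : ℤ_[p]) (f : C(ℤ_[p], ℝ)), ‖padicTranslate p a f‖ ≤ ‖f‖ := by
    intro a f
    apply (ContinuousMap.norm_le _ (norm_nonneg f)).mpr
    intro x
    exact f.norm_coe_le_norm _
  refine ⟨?_, hzero, hadd, ?_, ?_, ?_⟩
  · apply ContinuousMap.continuous_of_continuous_uncurry
    have h1 : Continuous fun q : (ℤ_[p] × C(ℤ_[p], ℝ)) × ℤ_[p] =>
        (q.1.2, q.2 + q.1.1) := by fun_prop
    exact ContinuousEval.continuous_eval.comp h1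
  · intro a
    constructor
    · intro f g; ext x; simp [padicTranslate]
    · intro c f; ext x; simp [padicTranslate]
  · intro a f
    refine le_antisymm (hle a f) ?_
    have : f = padicTranslate p (-a) (padicTranslate p a f) := by
      rw [← hadd, neg_add_cancel, hzero]
    calc ‖f‖ = ‖padicTranslate p (-a) (padicTranslate p a f)‖ := by rw [← this]
    _ ≤ ‖padicTranslate p a f‖ := hle _ _
  · refine ⟨insert 0 (Set.range (padicF p)), ?_, ?_⟩
    · apply Filter.Tendsto.isCompact_insert_range
      apply squeeze_zero_norm (fun n => norm_padicF_le p n)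
      exact tendsto_one_div_add_atTop_nhds_zero_nat
    · apply Set.infinite_of_injective_forall_mem (padicBall_injective p)
      intro n
      exact ⟨padicF p n, Or.inr ⟨n, rfl⟩, (stab_padicF p n).symm⟩
end
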